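/- Let Λ > 0 and Σ a closed stable CMC surface in an electrostatic system. If |Σ| ≥ 12π/Λ, then √(|Σ|/4π)·[(H²/16π)|Σ| + (4π/|Σ|)Q(Σ)² + (Λ/3)(|Σ|/4π) - 1] ≥ 0, and hence the charged Hawking mass M_CH(Σ) is nonnegative. -/

import Mathlib

open Real

lemma one_le_cosmological_term {Λ A : ℝ} (hΛ : 0 < Λ) (harea : 12 * π / Λ ≤ A) :
    1 ≤ (Λ / 3) * (A / (4 * π)) := by
  rw [div_le_iff₀ hΛ] at harea
  rw [div_mul_div_comm, le_div_iff₀ (by positivity)]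
  linarith

lemma hawking_bracket_nonneg {Λ A H Q : ℝ} (hA : 0 ≤ A) (hΛA : 1 ≤ (Λ / 3) * (A / (4 * π))) :
    0 ≤ H ^ 2 / (16 * π) * A + 4 * π / A * Q ^ 2 + (Λ / 3) * (A / (4 * π)) - 1 := by
  have hH : 0 ≤ H ^ 2 / (16 * π) * A := by positivity
  have hQ : 0 ≤ 4 * π / A * Q ^ 2 := by positivity
  linarith

theorem stable_cmc_mass_nonneg_general (Λ A H Q mCH : ℝ) (hΛ : 0 < Λ)
    (harea : 12 * Real.pi / Λ ≤ A)
    (hbound : Real.sqrt (A / (4 * Real.pi)) *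
        (H ^ 2 / (16 * Real.pi) * A + 4 * Real.pi / A * Q ^ 2
          + (Λ / 3) * (A / (4 * Real.pi)) - 1) ≤ mCH) :
    0 ≤ Real.sqrt (A / (4 * Real.pi)) *
        (H ^ 2 / (16 * Real.pi) * A + 4 * Real.pi / A * Q ^ 2
          + (Λ / 3) * (A / (4 * Real.pi)) - 1) ∧
      0 ≤ mCH := by
  have hA : 0 ≤ A := le_trans (by positivity) harea
  have hlower := mul_nonneg (sqrt_nonneg (A / (4 * π)))
    (hawking_bracket_nonneg (H := H) (Q := Q) hA (one_le_cosmological_term hΛ harea))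
  exact ⟨hlower, hlower.trans hbound⟩

/-- Nonnegativity of the charged Hawking mass for stable CMC surfaces: if
`Λ > 0`, `Σ` is a closed stable CMC surface with mean curvature `H`, area
`A = |Σ| ≥ 12π/Λ` and charge `Q = Q(Σ)`, then the lower bound
`√(A/4π)[(H²/16π)A + (4π/A)Q² + (Λ/3)(A/4π) - 1]` is nonnegative; hence any
charged Hawking mass `mCH` satisfying this lower bound is nonnegative. -/
theorem stable_cmc_mass_nonneg (Λ A H Q mCH : ℝ) (hΛ : 0 < Λ) (hA : 0 < A)
    (harea : 12 * Real.pi / Λ ≤ A)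
    (hbound : Real.sqrt (A / (4 * Real.pi)) *
        (H ^ 2 / (16 * Real.pi) * A + 4 * Real.pi / A * Q ^ 2
          + (Λ / 3) * (A / (4 * Real.pi)) - 1) ≤ mCH) :
    0 ≤ Real.sqrt (A / (4 * Real.pi)) *
        (H ^ 2 / (16 * Real.pi) * A + 4 * Real.pi / A * Q ^ 2
          + (Λ / 3) * (A / (4 * Real.pi)) - 1) ∧
      0 ≤ mCH :=
  stable_cmc_mass_nonneg_general Λ A H Q mCH hΛ harea hbound
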